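/- arXiv:2205.09941 — 2 statements merged into one kernel-verified Lean document; each statement's English description precedes it below -/
import Mathlib

section
/- If X is a length space in which for any two distinct points x,y there is a unique rectifiable arc with endpoints x and y, then X is a geodesic space. -/
open Set Metric
open scoped ENNReal NNReal

/-- A curve from `x` to `y` parameterized on `[0,1]`. -/
def IsCurveOn {X : Type*} [PseudoEMetricSpace X] (γ : ℝ → X) (x y : X) : Prop :=
  ContinuousOn γ (Set.Icc 0 1) ∧ γ 0 = x ∧ γ 1 = y

/-- The set of lengths of curves from `x` to `y`. -/
def curveLengths {X : Type*} [PseudoEMetricSpace X] (x y : X) : Set ℝ≥0∞ :=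
  {ℓ | ∃ γ : ℝ → X, IsCurveOn γ x y ∧ eVariationOn γ (Set.Icc 0 1) = ℓ}

/-- `X` is a length space if the distance between any two points equals the infimum
of lengths of curves connecting them. -/
def IsLengthSpace (X : Type*) [PseudoEMetricSpace X] : Prop :=
  ∀ x y : X, edist x y = sInf (curveLengths x y)

/-- `X` is a geodesic space if any two points are joined by a curve whose length
equals the distance between them. -/
def IsGeodesicSpace (X : Type*) [PseudoEMetricSpace X] : Prop :=
  ∀ x y : X, ∃ γ : ℝ → X, IsCurveOn γ x y ∧ eVariationOn γ (Set.Icc 0 1) = edist x y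

/-- `A` is an arc with endpoints `x` and `y`: a homeomorphic image of `[0,1]`,
parameterized by an injective continuous curve from `x` to `y`. -/
def IsArc {X : Type*} [PseudoEMetricSpace X] (A : Set X) (x y : X) : Prop :=
  ∃ γ : ℝ → X, IsCurveOn γ x y ∧ Set.InjOn γ (Set.Icc 0 1) ∧ γ '' Set.Icc 0 1 = A

/-- `A` is a rectifiable arc with endpoints `x` and `y`. -/
def IsRectArc {X : Type*} [PseudoEMetricSpace X] (A : Set X) (x y : X) : Prop :=
  ∃ γ : ℝ → X, IsCurveOn γ x y ∧ Set.InjOn γ (Set.Icc 0 1) ∧ γ '' Set.Icc 0 1 = A ∧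
    eVariationOn γ (Set.Icc 0 1) ≠ ⊤

/-- A metric tree: a geodesic space in which any two distinct points are joined by a
unique arc. -/
def IsMetricTree (X : Type*) [PseudoEMetricSpace X] : Prop :=
  IsGeodesicSpace X ∧ ∀ x y : X, x ≠ y → ∃! A : Set X, IsArc A x y

/-! Given a curve `g` of finite length `M` from `x` to `y ≠ x`, the `M`-Lipschitz curves from `x`
to `y` inside the compact set `g([0, 1])` form a compact family (Arzelà–Ascoli), on which length
is lower semicontinuous, so it has a shortest member. Reparametrized at constant speed this shortest
curve is injective, because cutting out a loop would make it shorter: it is a rectifiable arc no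
longer than `g`. In a length space this gives, for every `r > d(x, y)`, a rectifiable arc from `x`
to `y` of length `< r`. By uniqueness all of them are the same arc, and the length of an arc does
not depend on its injective parametrization, so that arc has length `d(x, y)`. -/

section ConstantSpeed

variable {E : Type*} [PseudoEMetricSpace E] {f : ℝ → E} {s : Set ℝ} {l : ℝ≥0}

theorem HasConstantSpeedOnWith.congr {g : ℝ → E} (hf : HasConstantSpeedOnWith f s l)
    (hfg : EqOn f g s) : HasConstantSpeedOnWith g s l := fun x hx y hy => by
  rw [← eVariationOn.eq_of_eqOn (hfg.mono inter_subset_left)]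
  exact hf hx hy

theorem HasConstantSpeedOnWith.mono {t : Set ℝ} [t.OrdConnected]
    (hf : HasConstantSpeedOnWith f s l) (hts : t ⊆ s) : HasConstantSpeedOnWith f t l :=
    fun x hx y hy => by
  have hIcc : Icc x y ⊆ t := Set.OrdConnected.out ‹_› hx hy
  rw [inter_eq_right.2 hIcc, ← inter_eq_right.2 (hIcc.trans hts)]
  exact hf (hts hx) (hts hy)

theorem HasConstantSpeedOnWith.comp {φ : ℝ → ℝ} (c : ℝ≥0)
    (hφ : ∀ x y, φ y - φ x = c * (y - x)) (hf : HasConstantSpeedOnWith f (φ '' s) l) :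
    HasConstantSpeedOnWith (f ∘ φ) s (l * c) := fun x hx y hy => by
  have hmono : MonotoneOn φ s := fun u _ v _ huv => by
    have := hφ u v
    nlinarith [c.coe_nonneg]
  rw [eVariationOn.comp_inter_Icc_eq_of_monotoneOn f φ hmono hx hy,
    hf (mem_image_of_mem φ hx) (mem_image_of_mem φ hy), hφ, NNReal.coe_mul, mul_assoc]

theorem HasConstantSpeedOnWith.lipschitzOnWith (hf : HasConstantSpeedOnWith f s l) :
    LipschitzOnWith l f s := by
  have key : ∀ ⦃x⦄, x ∈ s → ∀ ⦃y⦄, y ∈ s → x ≤ y → edist (f x) (f y) ≤ l * edist x y := by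
    intro x hx y hy hxy
    calc edist (f x) (f y) ≤ eVariationOn f (s ∩ Icc x y) :=
          eVariationOn.edist_le f ⟨hx, le_rfl, hxy⟩ ⟨hy, hxy, le_rfl⟩
      _ = l * edist x y := by
          rw [hf hx hy, ENNReal.ofReal_mul l.coe_nonneg, edist_comm, edist_dist, Real.dist_eq,
            abs_of_nonneg (sub_nonneg.2 hxy), ENNReal.ofReal_coe_nnreal]
  intro x hx y hy
  rcases le_total x y with hxy | hyx
  · exact key hx hy hxy
  · rw [edist_comm, edist_comm x]
    exact key hy hx hyx

theorem HasConstantSpeedOnWith.eVariationOn_unitInterval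
    (hf : HasConstantSpeedOnWith f (Icc 0 1) l) : eVariationOn f (Icc 0 1) = l := by
  simpa using hf (left_mem_Icc.2 zero_le_one) (right_mem_Icc.2 zero_le_one)

theorem HasConstantSpeedOnWith.exists_shortcut {σ : ℝ → E} {ℓ : ℝ≥0}
    (hσ : HasConstantSpeedOnWith σ (Icc 0 1) ℓ) {a b : ℝ} (ha : 0 ≤ a) (hab : a ≤ b)
    (hb : b ≤ 1) (heq : σ a = σ b) :
    ∃ q : ℝ → E, HasConstantSpeedOnWith q (Icc 0 1) (ℓ * (1 - (b - a)).toNNReal) ∧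
      q 0 = σ 0 ∧ q 1 = σ 1 ∧ q '' Icc 0 1 ⊆ σ '' Icc 0 1 := by
  set D := (1 - (b - a)).toNNReal
  have hD : (D : ℝ) = 1 - (b - a) := Real.coe_toNNReal _ (by linarith)
  -- `σ` with the loop `σ|[a, b]` cut out
  set c : ℝ → E := fun t => if t ≤ a then σ t else σ (t + (b - a))
  have hc_left : HasConstantSpeedOnWith c (Icc 0 a) ℓ :=
    (hσ.mono (Icc_subset_Icc le_rfl (hab.trans hb))).congr fun t ht => (if_pos ht.2).symm
  have hc_right : HasConstantSpeedOnWith c (Icc a D) ℓ := by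
    have hshift : (· + (b - a)) '' Icc a D = Icc b 1 := by
      rw [image_add_const_Icc, hD]; congr 1 <;> ring
    have hσ' : HasConstantSpeedOnWith σ ((· + (b - a)) '' Icc a D) ℓ :=
      hshift ▸ hσ.mono (Icc_subset_Icc (ha.trans hab) le_rfl)
    have := hσ'.comp 1 fun x y => by push_cast; ring
    rw [mul_one] at this
    refine this.congr fun t ht => ?_
    by_cases hta : t ≤ a
    · simp [c, le_antisymm hta ht.1, heq]
    · simp [c, hta]
  have hscale : (fun t => (D : ℝ) * t) '' Icc 0 1 = Icc 0 (D : ℝ) := by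
    rw [image_mul_left_Icc D.coe_nonneg zero_le_one, mul_zero, mul_one]
  refine ⟨c ∘ fun t => (D : ℝ) * t,
    (hscale ▸ hc_left.Icc_Icc hc_right).comp D fun x y => by ring, by simp [c, ha], ?_, ?_⟩
  · show c (D * 1) = σ 1
    rw [mul_one]
    by_cases hDa : (D : ℝ) ≤ a
    · have hb1 : b = 1 := by linarith
      rw [show c D = σ D from if_pos hDa, le_antisymm hDa (by linarith), heq, hb1]
    · rw [show c D = σ (D + (b - a)) from if_neg hDa, hD, sub_add_cancel]
  · rw [image_comp, hscale]
    rintro _ ⟨t, ht, rfl⟩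
    by_cases hta : t ≤ a
    · exact ⟨t, ⟨ht.1, hta.trans (hab.trans hb)⟩, (if_pos hta).symm⟩
    · exact ⟨t + (b - a), ⟨by linarith [ht.1], by linarith [ht.2]⟩, (if_neg hta).symm⟩

end ConstantSpeed

section Variation

open Filter Topology

variable {α : Type*} [LinearOrder α] {E : Type*} [PseudoEMetricSpace E] {f : α → E} {s : Set α}

theorem variationOnFromTo_eq_sub (f : α → E) (s : Set α) (x y : α) :
    variationOnFromTo f s x y =
      (eVariationOn f (s ∩ Icc x y)).toReal - (eVariationOn f (s ∩ Icc y x)).toReal := by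
  unfold variationOnFromTo
  split_ifs with hxy
  · rw [eVariationOn.subsingleton f ((subsingleton_Icc_of_ge hxy).anti inter_subset_right),
      ENNReal.toReal_zero, sub_zero]
  · rw [eVariationOn.subsingleton f
      ((subsingleton_Icc_of_ge (not_le.1 hxy).le).anti inter_subset_right),
      ENNReal.toReal_zero, zero_sub]

theorem BoundedVariationOn.continuousOn_variationOnFromTo [TopologicalSpace α] [OrderTopology α]
    (hV : BoundedVariationOn f s) (hf : ContinuousOn f s) {a : α} (ha : a ∈ s) :
    ContinuousOn (variationOnFromTo f s a) s := by
  intro x hx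
  have hright := (ENNReal.tendsto_toReal ENNReal.zero_ne_top).comp
    (hV.tendsto_eVariationOn_Icc_zero_right x ((hf x hx).mono inter_subset_left))
  have hleft := (ENNReal.tendsto_toReal ENNReal.zero_ne_top).comp
    (hV.tendsto_eVariationOn_Icc_zero_left ((hf x hx).mono inter_subset_left))
  have hlim := (hright.sub hleft).const_add (variationOnFromTo f s a x)
  rw [ENNReal.toReal_zero, sub_zero, add_zero] at hlim
  refine hlim.congr' (eventually_nhdsWithin_of_forall fun y hy => ?_)
  rw [Function.comp_apply, Function.comp_apply, ← variationOnFromTo_eq_sub,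
    variationOnFromTo.add hV.locallyBoundedVariationOn ha hx hy]

theorem BoundedVariationOn.image_variationOnFromTo_Icc {f : ℝ → E} {a b : ℝ}
    (hV : BoundedVariationOn f (Icc a b)) (hf : ContinuousOn f (Icc a b)) (hab : a ≤ b) :
    variationOnFromTo f (Icc a b) a '' Icc a b = Icc 0 (eVariationOn f (Icc a b)).toReal := by
  have ha : a ∈ Icc a b := left_mem_Icc.2 hab
  rw [(hV.continuousOn_variationOnFromTo hf ha).image_Icc_of_monotoneOn hab
    (variationOnFromTo.monotoneOn hV.locallyBoundedVariationOn ha), variationOnFromTo.self,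
    variationOnFromTo.eq_of_le f _ hab, inter_self]

theorem BoundedVariationOn.exists_hasConstantSpeedOnWith {E : Type*} [EMetricSpace E] {f : ℝ → E}
    (hV : BoundedVariationOn f (Icc 0 1)) (hf : ContinuousOn f (Icc 0 1)) :
    ∃ σ : ℝ → E, HasConstantSpeedOnWith σ (Icc 0 1) (eVariationOn f (Icc 0 1)).toNNReal ∧
      σ 0 = f 0 ∧ σ 1 = f 1 ∧ σ '' Icc 0 1 ⊆ f '' Icc 0 1 := by
  set L := (eVariationOn f (Icc 0 1)).toNNReal
  have h0 : (0 : ℝ) ∈ Icc 0 1 := left_mem_Icc.2 zero_le_one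
  have h1 : (1 : ℝ) ∈ Icc 0 1 := right_mem_Icc.2 zero_le_one
  set ρ := variationOnFromTo f (Icc 0 1) 0
  set τ := naturalParameterization f (Icc 0 1) 0
  have hρ : ρ '' Icc 0 1 = Icc 0 (L : ℝ) := hV.image_variationOnFromTo_Icc hf zero_le_one
  have hτρ : ∀ t ∈ Icc (0 : ℝ) 1, τ (ρ t) = f t := fun t ht =>
    edist_eq_zero.1 (edist_naturalParameterization_eq_zero hV.locallyBoundedVariationOn h0 ht)
  have hτ : HasUnitSpeedOn τ (Icc 0 (L : ℝ)) :=
    hρ ▸ has_unit_speed_naturalParameterization f hV.locallyBoundedVariationOn h0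
  have hscale : (fun t => (L : ℝ) * t) '' Icc 0 1 = Icc 0 (L : ℝ) := by
    rw [image_mul_left_Icc L.coe_nonneg zero_le_one, mul_zero, mul_one]
  have hρ1 : ρ 1 = L := by
    simp only [ρ, variationOnFromTo.eq_of_le f _ zero_le_one, inter_self, L,
      ENNReal.coe_toNNReal_eq_toReal]
  have hρ0 : ρ 0 = 0 := variationOnFromTo.self _ _ _
  refine ⟨τ ∘ fun t => (L : ℝ) * t, ?_, ?_, ?_, ?_⟩
  · have := (hscale ▸ hτ : HasConstantSpeedOnWith τ _ 1).comp L fun x y => by ring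
    rwa [one_mul] at this
  · simpa [hρ0] using hτρ 0 h0
  · simpa [hρ1] using hτρ 1 h1
  · rw [image_comp, hscale, ← hρ, ← image_comp]
    exact (image_congr hτρ).subset

end Variation

section Arcs

theorem Set.InjOn.exists_continuousOn_eqOn_comp {α β X : Type*} [TopologicalSpace α] [Nonempty α]
    [TopologicalSpace β] [TopologicalSpace X] [T2Space X] {g : α → X} {h : β → X} {s : Set α}
    {t : Set β} (hs : IsCompact s) (hg : ContinuousOn g s) (hgi : InjOn g s)
    (hh : ContinuousOn h t) (hhg : h '' t ⊆ g '' s) :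
    ∃ φ : β → α, MapsTo φ t s ∧ ContinuousOn φ t ∧ EqOn h (g ∘ φ) t := by
  have hmem : ∀ u ∈ t, h u ∈ g '' s := fun u hu => hhg (mem_image_of_mem h hu)
  refine ⟨Function.invFunOn g s ∘ h, fun u hu => Function.invFunOn_mem (hmem u hu), ?_,
    fun u hu => (Function.invFunOn_eq (hmem u hu)).symm⟩
  have : CompactSpace s := isCompact_iff_compactSpace.mp hs
  have hemb := (continuousOn_iff_continuous_domRestrict.mp hg).isClosedEmbedding hgi.injective
  let φ' : t → s := fun u => ⟨Function.invFunOn g s (h u), Function.invFunOn_mem (hmem u u.2)⟩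
  have hφ' : Continuous φ' := by
    rw [hemb.isEmbedding.continuous_iff]
    convert continuousOn_iff_continuous_domRestrict.mp hh using 1
    funext u
    exact Function.invFunOn_eq (hmem u u.2)
  exact continuousOn_iff_continuous_domRestrict.mpr (continuous_subtype_val.comp hφ')

theorem IsCurveOn.edist_le_eVariationOn {X : Type*} [PseudoEMetricSpace X] {γ : ℝ → X} {x y : X}
    (hγ : IsCurveOn γ x y) : edist x y ≤ eVariationOn γ (Icc 0 1) := by
  simpa [hγ.2.1, hγ.2.2] using
    eVariationOn.edist_le γ (left_mem_Icc.2 zero_le_one) (right_mem_Icc.2 zero_le_one)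

theorem eVariationOn_eq_of_injOn_of_image_subset {X : Type*} [MetricSpace X] {γ₁ γ₂ : ℝ → X}
    {x y : X} (h₁ : IsCurveOn γ₁ x y) (h₂ : IsCurveOn γ₂ x y) (hi₁ : InjOn γ₁ (Icc 0 1))
    (hi₂ : InjOn γ₂ (Icc 0 1)) (him : γ₁ '' Icc 0 1 ⊆ γ₂ '' Icc 0 1) :
    eVariationOn γ₁ (Icc 0 1) = eVariationOn γ₂ (Icc 0 1) := by
  have h0 : (0 : ℝ) ∈ Icc 0 1 := left_mem_Icc.2 zero_le_one
  have h1 : (1 : ℝ) ∈ Icc 0 1 := right_mem_Icc.2 zero_le_one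
  obtain ⟨φ, hφI, hφc, hγφ⟩ := hi₂.exists_continuousOn_eqOn_comp isCompact_Icc h₂.1 h₁.1 him
  have hφ0 : φ 0 = 0 := hi₂ (hφI h0) h0 ((hγφ h0).symm.trans (h₁.2.1.trans h₂.2.1.symm))
  have hφ1 : φ 1 = 1 := hi₂ (hφI h1) h1 ((hγφ h1).symm.trans (h₁.2.2.trans h₂.2.2.symm))
  have hφi : InjOn φ (Icc 0 1) := fun u hu v hv huv =>
    hi₁ hu hv ((hγφ hu).trans ((congrArg γ₂ huv).trans (hγφ hv).symm))
  have hφm : MonotoneOn φ (Icc 0 1) :=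
    (hφc.strictMonoOn_of_injOn_Icc zero_le_one (by rw [hφ0, hφ1]; exact zero_le_one)
      hφi).monotoneOn
  have hφim : φ '' Icc 0 1 = Icc 0 1 := by
    rw [hφc.image_Icc_of_monotoneOn zero_le_one hφm, hφ0, hφ1]
  rw [eVariationOn.eq_of_eqOn hγφ, eVariationOn.comp_eq_of_monotoneOn γ₂ φ hφm, hφim]

end Arcs

section Minimization

open scoped BoundedContinuousFunction

variable {X : Type*} [MetricSpace X]

theorem eVariationOn_domRestrict {α E : Type*} [LinearOrder α] [PseudoEMetricSpace E]
    (f : α → E) (s : Set α) : eVariationOn (s.domRestrict f) univ = eVariationOn f s := by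
  rw [show s.domRestrict f = f ∘ Subtype.val from rfl,
    eVariationOn.comp_eq_of_monotoneOn f Subtype.val fun _ _ _ _ h => h, image_univ,
    Subtype.range_coe]

theorem BoundedContinuousFunction.lowerSemicontinuous_eVariationOn {α : Type*} [LinearOrder α]
    [TopologicalSpace α] (s : Set α) : LowerSemicontinuous fun F : α →ᵇ X => eVariationOn F s :=
  fun F _ hv => eVariationOn.lowerSemicontinuous_aux
    (fun t _ => (continuous_eval_const t).tendsto F) hv

theorem BoundedContinuousFunction.isCompact_setOf_lipschitzWith {α : Type*} [PseudoMetricSpace α]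
    [CompactSpace α] {K : Set X} (hK : IsCompact K) (M : ℝ≥0) :
    IsCompact {F : α →ᵇ X | LipschitzWith M F ∧ ∀ t, F t ∈ K} := by
  refine arzela_ascoli₂ K hK _ ?_ (fun F t hF => hF.2 t)
    (LipschitzWith.uniformEquicontinuous _ M fun F => F.2.1).equicontinuous
  have hL : IsClosed {F : α →ᵇ X | LipschitzWith M F} :=
    (isClosed_setOfPred_lipschitzWith M).preimage (continuous_coe (α := α) (β := X))
  have hK' : IsClosed {F : α →ᵇ X | ∀ t, F t ∈ K} := by
    simp only [ofPred_forall]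
    exact isClosed_iInter fun t => hK.isClosed.preimage (continuous_eval_const t)
  exact hL.inter hK'

def lipschitzCurves (K : Set X) (M : ℝ≥0) (x y : X) : Set (ℝ → X) :=
  {f | LipschitzOnWith M f (Icc 0 1) ∧ MapsTo f (Icc 0 1) K ∧ f 0 = x ∧ f 1 = y}

open unitInterval in
theorem exists_forall_eVariationOn_le_of_lipschitzCurves {K : Set X} (hK : IsCompact K)
    {M : ℝ≥0} {x y : X} (hne : (lipschitzCurves K M x y).Nonempty) :
    ∃ f ∈ lipschitzCurves K M x y, ∀ g ∈ lipschitzCurves K M x y,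
      eVariationOn f (Icc 0 1) ≤ eVariationOn g (Icc 0 1) := by
  -- pass to `I →ᵇ X`, where Arzelà–Ascoli applies
  set A : Set (I →ᵇ X) := {F | LipschitzWith M F ∧ ∀ t, F t ∈ K} ∩ {F | F 0 = x ∧ F 1 = y}
  have hA : IsCompact A :=
    (BoundedContinuousFunction.isCompact_setOf_lipschitzWith hK M).inter_right
      ((isClosed_eq (continuous_eval_const 0) continuous_const).inter
        (isClosed_eq (continuous_eval_const 1) continuous_const))
  have to_bcf : ∀ g ∈ lipschitzCurves K M x y,
      ∃ G ∈ A, eVariationOn G univ = eVariationOn g (Icc 0 1) := by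
    rintro g ⟨hgL, hgK, hg0, hg1⟩
    refine ⟨.mkOfCompact ⟨(Icc (0 : ℝ) 1).domRestrict g, hgL.to_restrict.continuous⟩,
      ⟨⟨hgL.to_restrict, fun t => hgK t.2⟩, hg0, hg1⟩, eVariationOn_domRestrict g _⟩
  have of_bcf : ∀ F ∈ A, F ∘ projIcc 0 1 zero_le_one ∈ lipschitzCurves K M x y ∧
      eVariationOn (F ∘ projIcc 0 1 zero_le_one) (Icc 0 1) = eVariationOn F univ := by
    rintro F ⟨⟨hFL, hFK⟩, hF0, hF1⟩
    refine ⟨⟨?_, fun t _ => hFK _, by simpa using hF0, by simpa using hF1⟩, ?_⟩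
    · simpa using (hFL.comp (LipschitzWith.projIcc zero_le_one)).lipschitzOnWith (s := Icc 0 1)
    · rw [← eVariationOn_domRestrict]
      congr 1
      funext t
      simp
  obtain ⟨g₀, hg₀⟩ := hne
  obtain ⟨G₀, hG₀, -⟩ := to_bcf g₀ hg₀
  obtain ⟨F, hF, hmin⟩ := LowerSemicontinuousOn.exists_isMinOn ⟨G₀, hG₀⟩ hA
    ((BoundedContinuousFunction.lowerSemicontinuous_eVariationOn univ).lowerSemicontinuousOn A)
  refine ⟨_, (of_bcf F hF).1, fun g hg => ?_⟩
  obtain ⟨G, hG, hGg⟩ := to_bcf g hg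
  rw [(of_bcf F hF).2, ← hGg]
  exact hmin hG

end Minimization

section Extraction

variable {X : Type*} [MetricSpace X]

theorem HasConstantSpeedOnWith.injOn_of_forall_le {σ : ℝ → X} {K : Set X} {ℓ M : ℝ≥0}
    (hσ : HasConstantSpeedOnWith σ (Icc 0 1) ℓ) (hℓ : 0 < ℓ) (hℓM : ℓ ≤ M)
    (hσK : σ '' Icc 0 1 ⊆ K)
    (hmin : ∀ q ∈ lipschitzCurves K M (σ 0) (σ 1), (ℓ : ℝ≥0∞) ≤ eVariationOn q (Icc 0 1)) :
    InjOn σ (Icc 0 1) := by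
  have key : ∀ a ∈ Icc (0 : ℝ) 1, ∀ b ∈ Icc (0 : ℝ) 1, a < b → σ a ≠ σ b := by
    intro a ha b hb hab heq
    obtain ⟨q, hq, hq0, hq1, hqσ⟩ := hσ.exists_shortcut ha.1 hab.le hb.2 heq
    have hD : (1 - (b - a)).toNNReal < 1 := Real.toNNReal_lt_one.2 (by linarith)
    have hle := hmin q ⟨hq.lipschitzOnWith.weaken ((mul_le_of_le_one_right' hD.le).trans hℓM),
      mapsTo_iff_image_subset.2 (hqσ.trans hσK), hq0, hq1⟩
    rw [hq.eVariationOn_unitInterval, ENNReal.coe_le_coe] at hle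
    exact hle.not_gt (mul_lt_of_lt_one_right hℓ hD)
  intro a ha b hb hab
  by_contra hne
  rcases lt_or_gt_of_ne hne with h | h
  · exact key a ha b hb h hab
  · exact key b hb a ha h hab.symm

theorem exists_injOn_curve_eVariationOn_le {x y : X} (hxy : x ≠ y) {g : ℝ → X}
    (hg : IsCurveOn g x y) (hV : BoundedVariationOn g (Icc 0 1)) :
    ∃ σ : ℝ → X, IsCurveOn σ x y ∧ InjOn σ (Icc 0 1) ∧
      eVariationOn σ (Icc 0 1) ≤ eVariationOn g (Icc 0 1) := by
  set K := g '' Icc 0 1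
  set M := (eVariationOn g (Icc 0 1)).toNNReal
  obtain ⟨σ₀, hσ₀, hσ₀0, hσ₀1, hσ₀K⟩ := hV.exists_hasConstantSpeedOnWith hg.1
  have hσ₀mem : σ₀ ∈ lipschitzCurves K M x y := ⟨hσ₀.lipschitzOnWith,
    mapsTo_iff_image_subset.2 hσ₀K, hσ₀0.trans hg.2.1, hσ₀1.trans hg.2.2⟩
  obtain ⟨f, ⟨hfL, hfK, hf0, hf1⟩, hmin⟩ :=
    exists_forall_eVariationOn_le_of_lipschitzCurves (isCompact_Icc.image_of_continuousOn hg.1)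
      ⟨σ₀, hσ₀mem⟩
  have hfg : eVariationOn f (Icc 0 1) ≤ eVariationOn g (Icc 0 1) := by
    rw [← ENNReal.coe_toNNReal hV, ← hσ₀.eVariationOn_unitInterval]
    exact hmin σ₀ hσ₀mem
  have hfV : BoundedVariationOn f (Icc 0 1) := ne_top_of_le_ne_top hV hfg
  obtain ⟨σ, hσ, hσ0, hσ1, hσf⟩ := hfV.exists_hasConstantSpeedOnWith hfL.continuousOn
  have hℓ : ((eVariationOn f (Icc 0 1)).toNNReal : ℝ≥0∞) = eVariationOn f (Icc 0 1) :=
    ENNReal.coe_toNNReal hfV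
  have hℓ_pos : 0 < (eVariationOn f (Icc 0 1)).toNNReal := by
    rw [← ENNReal.coe_pos, hℓ]
    exact (edist_pos.2 hxy).trans_le
      (IsCurveOn.edist_le_eVariationOn ⟨hfL.continuousOn, hf0, hf1⟩)
  have hℓM : (eVariationOn f (Icc 0 1)).toNNReal ≤ M := by
    rw [← ENNReal.coe_le_coe, hℓ, ENNReal.coe_toNNReal hV]
    exact hfg
  refine ⟨σ, ⟨hσ.lipschitzOnWith.continuousOn, hσ0.trans hf0, hσ1.trans hf1⟩,
    hσ.injOn_of_forall_le hℓ_pos hℓM (hσf.trans (mapsTo_iff_image_subset.1 hfK)) fun q hq => ?_,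
    by rw [hσ.eVariationOn_unitInterval, hℓ]; exact hfg⟩
  rw [hℓ]
  exact hmin q (by rwa [hσ0, hσ1, hf0, hf1] at hq)

theorem IsLengthSpace.exists_injOn_curve_lt (hl : IsLengthSpace X) {x y : X} (hxy : x ≠ y)
    {r : ℝ≥0∞} (hr : edist x y < r) :
    ∃ σ : ℝ → X, IsCurveOn σ x y ∧ InjOn σ (Icc 0 1) ∧ eVariationOn σ (Icc 0 1) < r := by
  rw [hl x y] at hr
  obtain ⟨_, ⟨g, hg, rfl⟩, hgr⟩ := sInf_lt_iff.1 hr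
  obtain ⟨σ, hσ, hσi, hσg⟩ := exists_injOn_curve_eVariationOn_le hxy hg hgr.ne_top
  exact ⟨σ, hσ, hσi, hσg.trans_lt hgr⟩

end Extraction

/-- If `X` is a length space in which any two distinct points are joined by a unique
rectifiable arc, then `X` is a geodesic space. -/
theorem geodesic_of_unique_rect_arcs {X : Type*} [MetricSpace X]
    (hl : IsLengthSpace X)
    (hu : ∀ x y : X, x ≠ y → ∃! A : Set X, IsRectArc A x y) :
    IsGeodesicSpace X := by
  intro x y
  rcases eq_or_ne x y with rfl | hxy
  · refine ⟨fun _ => x, ⟨continuousOn_const, rfl, rfl⟩, ?_⟩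
    rw [edist_self, eVariationOn.eq_zero_iff]
    simp
  obtain ⟨_, ⟨γ, hγ, hγi, rfl, -⟩, hγ_unique⟩ := hu x y hxy
  refine ⟨γ, hγ, le_antisymm (le_of_forall_gt_imp_ge_of_dense fun r hr => ?_)
    hγ.edist_le_eVariationOn⟩
  obtain ⟨σ, hσ, hσi, hσr⟩ := hl.exists_injOn_curve_lt hxy hr
  have hσγ : σ '' Icc 0 1 = γ '' Icc 0 1 := hγ_unique _ ⟨σ, hσ, hσi, rfl, hσr.ne_top⟩
  rw [eVariationOn_eq_of_injOn_of_image_subset hγ hσ hγi hσi hσγ.ge]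
  exact hσr.le
end

section
/- A length space X is a metric tree if and only if for any two distinct points x,y∈X there is a unique rectifiable arc with endpoints x and y. -/
open Set Metric
open scoped ENNReal NNReal

/-!
Both directions rest on extracting, from a rectifiable curve, an arc with the same endpoints that
is no longer and lies in its image. Loops are removed by Zorn's lemma: a minimal closed
`K ⊆ [0, 1]` containing `0, 1` such that `σ` agrees at the two ends of each gap of `K` makes
`r ↦ σ (max (K ∩ [0, r]))` a curve whose fibres are intervals, and its arc-length
parametrization is injective.

If rectifiable arcs are unique, the one from `x` to `y` is a geodesic: any curve from `x` to `y`
of finite length contains a rectifiable arc, necessarily this one, and the length of an arc does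
not depend on its parametrization. Moreover, a curve from `a` to `b` missing a point `q` of that
arc can be replaced, in a length space, by a rectifiable curve missing `q`, which contains a
second rectifiable arc from `a` to `b`. So every curve from `a` to `b` covers the rectifiable
arc, and an arc containing it with the same endpoints coincides with it.
-/

lemma IsCompact.continuousOn_invFunOn {α β : Type*} [TopologicalSpace α] [Nonempty α]
    [TopologicalSpace β] [T2Space β] {f : α → β} {s : Set α} (hs : IsCompact s)
    (hf : ContinuousOn f s) (hinj : InjOn f s) :
    ContinuousOn (Function.invFunOn f s) (f '' s) := by
  rw [continuousOn_iff_isClosed]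
  intro t ht
  refine ⟨f '' (t ∩ s), ((hs.inter_left ht).image_of_continuousOn
    (hf.mono inter_subset_right)).isClosed, ?_⟩
  ext z
  simp only [mem_inter_iff, mem_preimage, mem_image]
  constructor
  · rintro ⟨hz, w, hw, rfl⟩
    exact ⟨⟨w, ⟨hinj.leftInvOn_invFunOn hw ▸ hz, hw⟩, rfl⟩, w, hw, rfl⟩
  · rintro ⟨⟨w, ⟨hwt, hws⟩, rfl⟩, -⟩
    exact ⟨(hinj.leftInvOn_invFunOn hws).symm ▸ hwt, w, hws, rfl⟩

section Reparametrization

variable {X : Type*} [EMetricSpace X]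

lemma exists_reparam_of_image_subset {σ γ : ℝ → X} (hσc : ContinuousOn σ (Icc 0 1))
    (hσi : InjOn σ (Icc 0 1)) (hγc : ContinuousOn γ (Icc 0 1))
    (hsub : γ '' Icc 0 1 ⊆ σ '' Icc 0 1) (h0 : γ 0 = σ 0) (h1 : γ 1 = σ 1) :
    ∃ φ : ℝ → ℝ, ContinuousOn φ (Icc 0 1) ∧ MapsTo φ (Icc 0 1) (Icc 0 1) ∧ φ 0 = 0 ∧
      φ 1 = 1 ∧ EqOn γ (σ ∘ φ) (Icc 0 1) := by
  have hmaps : MapsTo γ (Icc 0 1) (σ '' Icc 0 1) := fun s hs => hsub (mem_image_of_mem γ hs)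
  have hleft := hσi.leftInvOn_invFunOn
  refine ⟨Function.invFunOn σ (Icc 0 1) ∘ γ,
    (isCompact_Icc.continuousOn_invFunOn hσc hσi).comp hγc hmaps,
    (surjOn_image σ _).mapsTo_invFunOn.comp hmaps, ?_, ?_, ?_⟩
  · simp only [Function.comp_apply, h0, hleft (left_mem_Icc.2 zero_le_one)]
  · simp only [Function.comp_apply, h1, hleft (right_mem_Icc.2 zero_le_one)]
  · intro s hs
    exact ((surjOn_image σ _).rightInvOn_invFunOn (hmaps hs)).symm

lemma image_eq_of_image_subset {σ γ : ℝ → X} (hσc : ContinuousOn σ (Icc 0 1))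
    (hσi : InjOn σ (Icc 0 1)) (hγc : ContinuousOn γ (Icc 0 1))
    (hsub : γ '' Icc 0 1 ⊆ σ '' Icc 0 1) (h0 : γ 0 = σ 0) (h1 : γ 1 = σ 1) :
    γ '' Icc 0 1 = σ '' Icc 0 1 := by
  obtain ⟨φ, hφc, hφm, hφ0, hφ1, hγφ⟩ := exists_reparam_of_image_subset hσc hσi hγc hsub h0 h1
  have hφI : φ '' Icc 0 1 = Icc 0 1 :=
    (hφm.image_subset).antisymm (by
      simpa only [hφ0, hφ1] using intermediate_value_Icc zero_le_one hφc)
  rw [hγφ.image_eq, image_comp, hφI]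

lemma eVariationOn_eq_of_image_eq {σ γ : ℝ → X} (hσc : ContinuousOn σ (Icc 0 1))
    (hσi : InjOn σ (Icc 0 1)) (hγc : ContinuousOn γ (Icc 0 1)) (hγi : InjOn γ (Icc 0 1))
    (him : γ '' Icc 0 1 = σ '' Icc 0 1) (h0 : γ 0 = σ 0) (h1 : γ 1 = σ 1) :
    eVariationOn γ (Icc 0 1) = eVariationOn σ (Icc 0 1) := by
  obtain ⟨φ, hφc, hφm, hφ0, hφ1, hγφ⟩ :=
    exists_reparam_of_image_subset hσc hσi hγc him.subset h0 h1
  have hφi : InjOn φ (Icc 0 1) := fun s hs t ht hst =>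
    hγi hs ht (by rw [hγφ hs, hγφ ht, Function.comp_apply, hst]; rfl)
  have hφmono : MonotoneOn φ (Icc 0 1) :=
    (hφc.strictMonoOn_of_injOn_Icc zero_le_one (by rw [hφ0, hφ1]; exact zero_le_one)
      hφi).monotoneOn
  rw [eVariationOn.eq_of_eqOn hγφ, eVariationOn.comp_eq_of_monotoneOn σ φ hφmono,
    hφc.image_Icc_of_monotoneOn zero_le_one hφmono, hφ0, hφ1]

end Reparametrization

section Concatenation

variable {X : Type*} [PseudoEMetricSpace X]

lemma eVariationOn_comp_Icc_of_monotoneOn (f : ℝ → X) {φ : ℝ → ℝ} {a b : ℝ} (hab : a ≤ b)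
    (hφc : ContinuousOn φ (Icc a b)) (hφm : MonotoneOn φ (Icc a b)) :
    eVariationOn (f ∘ φ) (Icc a b) = eVariationOn f (Icc (φ a) (φ b)) := by
  rw [eVariationOn.comp_eq_of_monotoneOn f φ hφm, hφc.image_Icc_of_monotoneOn hab hφm]

lemma IsCurveOn.exists_concat {α β : ℝ → X} {p q r : X} (hα : IsCurveOn α p q)
    (hβ : IsCurveOn β q r) :
    ∃ δ : ℝ → X, IsCurveOn δ p r ∧
      eVariationOn δ (Icc 0 1) = eVariationOn α (Icc 0 1) + eVariationOn β (Icc 0 1) ∧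
      δ '' Icc 0 1 ⊆ α '' Icc 0 1 ∪ β '' Icc 0 1 := by
  obtain ⟨hαc, hα0, hα1⟩ := hα
  obtain ⟨hβc, hβ0, hβ1⟩ := hβ
  set u : ℝ → ℝ := fun s => 2 * s
  set w : ℝ → ℝ := fun s => 2 * s - 1
  have hu : MapsTo u (Icc 0 (1 / 2)) (Icc 0 1) := fun s hs => ⟨by grind, by grind⟩
  have hw : MapsTo w (Icc (1 / 2) 1) (Icc 0 1) := fun s hs => ⟨by grind, by grind⟩
  have huc : Continuous u := by fun_prop
  have hwc : Continuous w := by fun_prop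
  have hum : MonotoneOn u (Icc 0 (1 / 2)) := fun s _ t _ hst => by grind
  have hwm : MonotoneOn w (Icc (1 / 2) 1) := fun s _ t _ hst => by grind
  set δ : ℝ → X := fun s => if s ≤ 1 / 2 then α (u s) else β (w s)
  have hδu : EqOn δ (α ∘ u) (Icc 0 (1 / 2)) := fun s hs => if_pos hs.2
  have hδw : EqOn δ (β ∘ w) (Icc (1 / 2) 1) := by
    intro s hs
    rcases hs.1.eq_or_lt with rfl | hs'
    · simp only [δ, u, w, Function.comp_apply, le_refl, if_true]
      norm_num [hα1, hβ0]
    · exact if_neg (not_le.2 hs')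
  have hsplit : Icc (0 : ℝ) 1 = Icc 0 (1 / 2) ∪ Icc (1 / 2) 1 :=
    (Icc_union_Icc_eq_Icc (by norm_num) (by norm_num)).symm
  refine ⟨δ, ⟨?_, ?_, ?_⟩, ?_, ?_⟩
  · rw [hsplit]
    exact ((hαc.comp huc.continuousOn hu).congr hδu).union_of_isClosed
      ((hβc.comp hwc.continuousOn hw).congr hδw) isClosed_Icc isClosed_Icc
  · simp [δ, u, hα0]
  · norm_num [δ, w, hβ1]
  · rw [hsplit, eVariationOn.union δ (isGreatest_Icc (by norm_num)) (isLeast_Icc (by norm_num)),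
      eVariationOn.eq_of_eqOn hδu, eVariationOn.eq_of_eqOn hδw,
      eVariationOn_comp_Icc_of_monotoneOn α (by norm_num) huc.continuousOn hum,
      eVariationOn_comp_Icc_of_monotoneOn β (by norm_num) hwc.continuousOn hwm]
    norm_num [u, w]
  · rw [hsplit, image_union, hδu.image_eq, hδw.image_eq, image_comp, image_comp, ← hsplit]
    exact union_subset_union (image_mono hu.image_subset) (image_mono hw.image_subset)

def RectJoinedIn (U : Set X) (a b : X) : Prop :=
  ∃ c : ℝ → X, IsCurveOn c a b ∧ eVariationOn c (Icc 0 1) ≠ ⊤ ∧ c '' Icc 0 1 ⊆ U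

lemma RectJoinedIn.refl {U : Set X} {a : X} (ha : a ∈ U) : RectJoinedIn U a a :=
  ⟨fun _ => a, ⟨continuousOn_const, rfl, rfl⟩,
    by rw [eVariationOn.constant_on (by simp)]; exact ENNReal.zero_ne_top,
    by rintro _ ⟨_, _, rfl⟩; exact ha⟩

lemma RectJoinedIn.mono {U V : Set X} {a b : X} (h : RectJoinedIn U a b) (hUV : U ⊆ V) :
    RectJoinedIn V a b :=
  let ⟨c, hc, hcfin, hcU⟩ := h
  ⟨c, hc, hcfin, hcU.trans hUV⟩

lemma RectJoinedIn.trans {U : Set X} {a b c : X} (hab : RectJoinedIn U a b)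
    (hbc : RectJoinedIn U b c) : RectJoinedIn U a c := by
  obtain ⟨α, hα, hαfin, hαU⟩ := hab
  obtain ⟨β, hβ, hβfin, hβU⟩ := hbc
  obtain ⟨δ, hδ, hδvar, hδU⟩ := hα.exists_concat hβ
  exact ⟨δ, hδ, hδvar ▸ ENNReal.add_ne_top.2 ⟨hαfin, hβfin⟩, hδU.trans (union_subset hαU hβU)⟩

lemma rectJoinedIn_of_chain {U : Set X} (f : ℕ → X) (h0 : f 0 ∈ U) (n : ℕ)
    (h : ∀ i < n, RectJoinedIn U (f i) (f (i + 1))) : RectJoinedIn U (f 0) (f n) := by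
  induction n with
  | zero => exact RectJoinedIn.refl h0
  | succ n ih => exact (ih fun i hi => h i (by omega)).trans (h n (by omega))

end Concatenation

section LengthSpace

variable {X : Type*} [PseudoMetricSpace X]

lemma IsLengthSpace.rectJoinedIn_ball (hl : IsLengthSpace X) {a b : X} {r : ℝ}
    (hab : dist a b < r) : RectJoinedIn (ball a r) a b := by
  rw [← edist_lt_ofReal, hl, sInf_lt_iff] at hab
  obtain ⟨ℓ, ⟨c, hc, rfl⟩, hℓ⟩ := hab
  refine ⟨c, hc, hℓ.ne_top, ?_⟩
  rintro _ ⟨s, hs, rfl⟩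
  rw [mem_ball, dist_comm, ← edist_lt_ofReal, ← hc.2.1]
  exact (eVariationOn.edist_le c (left_mem_Icc.2 zero_le_one) hs).trans_lt hℓ

/-- Join closely spaced points of the curve by short curves: these stay in a uniform
neighbourhood of the compact image, which lies in `U`. -/
lemma IsLengthSpace.rectJoinedIn_of_curve (hl : IsLengthSpace X) {U : Set X} (hU : IsOpen U)
    {σ : ℝ → X} {a b : X} (hσ : IsCurveOn σ a b) (hσU : σ '' Icc 0 1 ⊆ U) :
    RectJoinedIn U a b := by
  obtain ⟨hσc, hσ0, hσ1⟩ := hσ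
  obtain ⟨δ, hδ, hδU⟩ :=
    (isCompact_Icc.image_of_continuousOn hσc).exists_thickening_subset_open hU hσU
  obtain ⟨η, hη, hση⟩ := Metric.uniformContinuousOn_iff.1
    (isCompact_Icc.uniformContinuousOn_of_continuous hσc) δ hδ
  obtain ⟨n, hn⟩ := exists_nat_one_div_lt hη
  have hN : (0 : ℝ) < n + 1 := by positivity
  set f : ℕ → X := fun i => σ (i / (n + 1))
  have hf : ∀ i ≤ n + 1, (i : ℝ) / (n + 1) ∈ Icc (0 : ℝ) 1 := fun i hi =>
    ⟨by positivity, (div_le_one hN).2 (by exact_mod_cast hi)⟩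
  have hchain := rectJoinedIn_of_chain (U := U) f
    (by simpa [f] using hσU (mem_image_of_mem σ (left_mem_Icc.2 zero_le_one))) (n + 1)
    fun i hi => by
      refine (hl.rectJoinedIn_ball (hση _ (hf i hi.le) _ (hf (i + 1) hi) ?_)).mono
        ((ball_subset_thickening (mem_image_of_mem σ (hf i hi.le)) δ).trans hδU)
      rw [Real.dist_eq, abs_sub_comm, ← sub_div]
      push_cast
      rwa [add_sub_cancel_left, abs_of_pos (by positivity)]
  simpa [f, hσ0, hσ1, div_self hN.ne'] using hchain

end LengthSpace

lemma IsClosed.exists_gap {K : Set ℝ} (hK : IsClosed K) {a b c d : ℝ} (ha : a ∈ K)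
    (hb : b ∈ K) (hac : a ≤ c) (hdb : d ≤ b) (hcd : Disjoint (Ioo c d) K) :
    ∃ p ∈ K ∩ Icc a c, ∃ q ∈ K ∩ Icc d b, Disjoint (Ioo p q) K := by
  have hbdd : BddAbove (K ∩ Icc a c) := bddAbove_Icc.mono inter_subset_right
  have hbdd' : BddBelow (K ∩ Icc d b) := bddBelow_Icc.mono inter_subset_right
  refine ⟨_, (hK.inter isClosed_Icc).csSup_mem ⟨a, ha, le_rfl, hac⟩ hbdd,
    _, (hK.inter isClosed_Icc).csInf_mem ⟨b, hb, hdb, le_rfl⟩ hbdd', ?_⟩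
  refine disjoint_left.2 fun z ⟨hpz, hzq⟩ hzK => ?_
  have hap : a ≤ sSup (K ∩ Icc a c) := le_csSup hbdd ⟨ha, le_rfl, hac⟩
  have hqb : sInf (K ∩ Icc d b) ≤ b := csInf_le hbdd' ⟨hb, hdb, le_rfl⟩
  rcases le_or_gt z c with hzc | hcz
  · exact (le_csSup hbdd ⟨hzK, hap.trans hpz.le, hzc⟩).not_gt hpz
  rcases lt_or_ge z d with hzd | hdz
  · exact disjoint_left.1 hcd ⟨hcz, hzd⟩ hzK
  · exact (csInf_le hbdd' ⟨hzK, hdz, hzq.le.trans hqb⟩).not_gt hzq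

noncomputable def lastBefore (K : Set ℝ) (r : ℝ) : ℝ := sSup (K ∩ Iic r)

section LastBefore

variable {K : Set ℝ} {k r : ℝ}

lemma le_lastBefore (hk : k ∈ K) (hkr : k ≤ r) : k ≤ lastBefore K r :=
  le_csSup ⟨r, fun _ h => h.2⟩ ⟨hk, hkr⟩

lemma lastBefore_mem (hK : IsClosed K) (hk : k ∈ K) (hkr : k ≤ r) :
    lastBefore K r ∈ K ∩ Iic r :=
  (hK.inter isClosed_Iic).csSup_mem ⟨k, hk, hkr⟩ ⟨r, fun _ h => h.2⟩

lemma lastBefore_of_mem (hk : k ∈ K) : lastBefore K k = k :=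
  IsGreatest.csSup_eq ⟨⟨hk, mem_Iic.2 le_rfl⟩, fun _ h => h.2⟩

lemma lastBefore_mono (hk : k ∈ K) (hkr : k ≤ r) {r' : ℝ} (hrr' : r ≤ r') :
    lastBefore K r ≤ lastBefore K r' :=
  csSup_le_csSup ⟨r', fun _ h => h.2⟩ ⟨k, hk, hkr⟩
    (inter_subset_inter_right _ (Iic_subset_Iic.2 hrr'))

end LastBefore

section LoopRemoval

variable {X : Type*} {σ : ℝ → X} {K : Set ℝ}

def BridgesGaps (σ : ℝ → X) (K : Set ℝ) : Prop :=
  ∀ a ∈ K, ∀ b ∈ K, a ≤ b → Disjoint (Ioo a b) K → σ a = σ b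

lemma BridgesGaps.diff_Ioo (hσK : BridgesGaps σ K) {s t : ℝ} (hs : s ∈ K)
    (ht : t ∈ K) (hst : σ s = σ t) : BridgesGaps σ (K \ Ioo s t) := by
  intro a ha b hb hab hgap
  have hgap' : ∀ z ∈ K, z ∈ Ioo a b → z ∈ Ioo s t :=
    fun z hzK hz => by_contra fun hzst => disjoint_left.1 hgap hz ⟨hzK, hzst⟩
  by_cases hout : b ≤ s ∨ t ≤ a
  · refine hσK a ha.1 b hb.1 hab (disjoint_left.2 fun z hz hzK => ?_)
    have := hgap' z hzK hz
    grind
  push Not at hout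
  have has : a ≤ s := not_lt.1 fun h => ha.2 ⟨h, hout.2⟩
  have htb : t ≤ b := not_lt.1 fun h => hb.2 ⟨hout.1, h⟩
  have hsa : σ a = σ s := hσK a ha.1 s hs has (disjoint_left.2 fun z hz hzK => by
    have := hgap' z hzK ⟨hz.1, hz.2.trans hout.1⟩
    grind)
  have htb' : σ t = σ b := hσK t ht b hb.1 htb (disjoint_left.2 fun z hz hzK => by
    have := hgap' z hzK ⟨hout.2.trans hz.1, hz.2⟩
    grind)
  rw [hsa, hst, htb']

lemma BridgesGaps.sInter [MetricSpace X] (hσ : ContinuousOn σ (Icc 0 1))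
    {c : Set (Set ℝ)} (hc : IsChain (· ⊆ ·) c) {K₀ : Set ℝ} (hK₀ : K₀ ∈ c) (hK₀I : K₀ ⊆ Icc 0 1)
    (hcl : ∀ K ∈ c, IsClosed K ∧ BridgesGaps σ K) : BridgesGaps σ (⋂₀ c) := by
  intro a ha b hb hab hgap
  have haI := hK₀I (ha K₀ hK₀)
  have hbI := hK₀I (hb K₀ hK₀)
  rcases hab.eq_or_lt with rfl | hab
  · rfl
  refine eq_of_forall_dist_le fun η hη => ?_
  obtain ⟨εa, hεa, hσa⟩ := Metric.continuousWithinAt_iff.1 (hσ a haI) (η / 2) (by positivity)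
  obtain ⟨εb, hεb, hσb⟩ := Metric.continuousWithinAt_iff.1 (hσ b hbI) (η / 2) (by positivity)
  set ε := min (min (εa / 2) (εb / 2)) ((b - a) / 3)
  have hε : 0 < ε := lt_min (lt_min (by positivity) (by positivity)) (by linarith)
  have hεa' : ε ≤ εa / 2 := (min_le_left _ _).trans (min_le_left _ _)
  have hεb' : ε ≤ εb / 2 := (min_le_left _ _).trans (min_le_right _ _)
  have hεab : ε ≤ (b - a) / 3 := min_le_right _ _
  have : Nonempty c := ⟨⟨K₀, hK₀⟩⟩
  -- The compact interval `[a + ε, b - ε]` misses `⋂₀ c`, hence misses some member of the chain.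
  obtain ⟨⟨L, hLc⟩, hL⟩ := (isCompact_Icc (a := a + ε) (b := b - ε)).elim_directed_family_closed
    (fun L : c => (L : Set ℝ)) (fun L => (hcl L L.2).1)
    (by
      rw [← sInter_eq_iInter, eq_empty_iff_forall_notMem]
      exact fun z hz => disjoint_left.1 hgap ⟨by linarith [hz.1.1], by linarith [hz.1.2]⟩ hz.2)
    (fun L₁ L₂ => (hc.total L₁.2 L₂.2).elim (fun h => ⟨L₁, le_rfl, h⟩)
      (fun h => ⟨L₂, h, le_rfl⟩))
  obtain ⟨hLcl, hσL⟩ := hcl L hLc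
  obtain ⟨p, ⟨hpL, hap, hpa⟩, q, ⟨hqL, hqb, hbq⟩, hpq⟩ :=
    hLcl.exists_gap (ha L hLc) (hb L hLc) (le_add_of_nonneg_right hε.le) (sub_le_self _ hε.le)
      (disjoint_left.2 fun z hz hzL => (eq_empty_iff_forall_notMem.1 hL) z
        ⟨⟨hz.1.le, hz.2.le⟩, hzL⟩)
  have hdp : dist (σ p) (σ a) < η / 2 :=
    hσa ⟨haI.1.trans hap, by linarith [hbI.2]⟩
      (by rw [Real.dist_eq, abs_lt]; constructor <;> linarith)
  have hdq : dist (σ q) (σ b) < η / 2 :=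
    hσb ⟨by linarith [haI.1], hbq.trans hbI.2⟩
      (by rw [Real.dist_eq, abs_lt]; constructor <;> linarith)
  calc dist (σ a) (σ b) ≤ dist (σ p) (σ a) + dist (σ q) (σ b) := by
        rw [hσL p hpL q hqL (by linarith) hpq, dist_comm (σ q)]; exact dist_triangle _ _ _
    _ ≤ η := by linarith

lemma exists_minimal_bridgesGaps [MetricSpace X] (hσ : ContinuousOn σ (Icc 0 1)) :
    ∃ K : Set ℝ, IsClosed K ∧ K ⊆ Icc 0 1 ∧ 0 ∈ K ∧ 1 ∈ K ∧ BridgesGaps σ K ∧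
      ∀ s ∈ K, ∀ t ∈ K, σ s = σ t → Disjoint (Ioo s t) K := by
  set F : Set (Set ℝ) := {K | IsClosed K ∧ K ⊆ Icc 0 1 ∧ 0 ∈ K ∧ 1 ∈ K ∧ BridgesGaps σ K}
  have hIF : Icc (0 : ℝ) 1 ∈ F := by
    refine ⟨isClosed_Icc, subset_rfl, left_mem_Icc.2 zero_le_one, right_mem_Icc.2 zero_le_one,
      fun a ha b hb hab hgap => ?_⟩
    rcases hab.eq_or_lt with rfl | hab
    · rfl
    exact (disjoint_left.1 hgap (show (a + b) / 2 ∈ Ioo a b from ⟨by linarith, by linarith⟩)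
      ⟨by linarith [ha.1], by linarith [hb.2]⟩).elim
  obtain ⟨K, -, hKmin⟩ := zorn_superset_nonempty F (fun c hcF hc ⟨K₀, hK₀⟩ =>
    ⟨⋂₀ c, ⟨isClosed_sInter fun K hK => (hcF hK).1, (sInter_subset_of_mem hK₀).trans (hcF hK₀).2.1,
      fun K hK => (hcF hK).2.2.1, fun K hK => (hcF hK).2.2.2.1,
      BridgesGaps.sInter hσ hc hK₀ (hcF hK₀).2.1 fun K hK => ⟨(hcF hK).1, (hcF hK).2.2.2.2⟩⟩,
      fun K hK => sInter_subset_of_mem hK⟩) _ hIF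
  obtain ⟨hKcl, hKI, h0, h1, hσK⟩ := hKmin.prop
  refine ⟨K, hKcl, hKI, h0, h1, hσK, fun s hs t ht hst => ?_⟩
  have hK'F : K \ Ioo s t ∈ F :=
    ⟨hKcl.sdiff isOpen_Ioo, sdiff_subset.trans hKI,
      ⟨h0, fun h => (hKI hs).1.not_gt h.1⟩, ⟨h1, fun h => (hKI ht).2.not_gt h.2⟩,
      hσK.diff_Ioo hs ht hst⟩
  exact disjoint_left.2 fun z hz hzK => (hKmin.2 hK'F sdiff_subset hzK).2 hz

lemma BridgesGaps.comp_lastBefore_eq_or (hσK : BridgesGaps σ K) (hK : IsClosed K)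
    (h0 : (0 : ℝ) ∈ K) {r₀ r : ℝ} (hr₀ : 0 ≤ r₀) (hr : r₀ ≤ r) :
    σ (lastBefore K r) = σ (lastBefore K r₀) ∨
      ∃ k₀ ∈ Icc r₀ r, ∃ k₁ ∈ Icc r₀ r, σ (lastBefore K r₀) = σ k₀ ∧
        σ (lastBefore K r) = σ k₁ := by
  by_cases hne : (K ∩ Ioc r₀ r).Nonempty
  · right
    have hbdd : BddBelow (K ∩ Icc r₀ r) := ⟨r₀, fun _ h => h.2.1⟩
    have hk₀ : sInf (K ∩ Icc r₀ r) ∈ K ∩ Icc r₀ r := (hK.inter isClosed_Icc).csInf_mem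
      (hne.mono (inter_subset_inter_right _ Ioc_subset_Icc_self)) hbdd
    obtain ⟨hp, hpr₀⟩ := lastBefore_mem hK h0 hr₀
    refine ⟨_, hk₀.2, lastBefore K r, ⟨hk₀.2.1.trans (le_lastBefore hk₀.1 hk₀.2.2),
      (lastBefore_mem hK h0 (hr₀.trans hr)).2⟩,
      hσK _ hp _ hk₀.1 (hpr₀.trans hk₀.2.1) (disjoint_left.2 fun z hz hzK => ?_), rfl⟩
    rcases le_or_gt z r₀ with hzr₀ | hr₀z
    · exact (le_lastBefore hzK hzr₀).not_gt hz.1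
    · exact (csInf_le hbdd ⟨hzK, hr₀z.le, hz.2.le.trans hk₀.2.2⟩).not_gt hz.2
  · left
    refine congrArg (fun s => σ (sSup s)) (Set.ext fun z => ⟨fun hz => ⟨hz.1, ?_⟩,
      fun hz => ⟨hz.1, hz.2.trans hr⟩⟩)
    exact not_lt.1 fun h => hne ⟨z, hz.1, h, hz.2⟩

lemma BridgesGaps.continuousOn_comp_lastBefore [PseudoMetricSpace X] (hσK : BridgesGaps σ K)
    (hσ : ContinuousOn σ (Icc 0 1)) (hK : IsClosed K) (h0 : (0 : ℝ) ∈ K) :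
    ContinuousOn (σ ∘ lastBefore K) (Icc 0 1) := by
  refine UniformContinuousOn.continuousOn (Metric.uniformContinuousOn_iff.2 fun ε hε => ?_)
  obtain ⟨δ, hδ, hσδ⟩ := Metric.uniformContinuousOn_iff.1
    (isCompact_Icc.uniformContinuousOn_of_continuous hσ) ε hε
  suffices H : ∀ x ∈ Icc (0 : ℝ) 1, ∀ y ∈ Icc (0 : ℝ) 1, x ≤ y → dist x y < δ →
      dist (σ (lastBefore K x)) (σ (lastBefore K y)) < ε by
    refine ⟨δ, hδ, fun x hx y hy hxy => ?_⟩
    rcases le_total x y with h | h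
    · exact H x hx y hy h hxy
    · rw [dist_comm] at hxy ⊢
      exact H y hy x hx h hxy
  intro x hx y hy hxy hd
  rcases hσK.comp_lastBefore_eq_or hK h0 hx.1 hxy with h | ⟨k₀, hk₀, k₁, hk₁, h₀, h₁⟩
  · simpa [h] using hε
  · rw [h₀, h₁]
    refine hσδ k₀ (Icc_subset_Icc hx.1 hy.2 hk₀) k₁ (Icc_subset_Icc hx.1 hy.2 hk₁)
      ((Real.dist_le_of_mem_Icc hk₀ hk₁).trans_lt ?_)
    rwa [dist_comm, Real.dist_eq, abs_of_nonneg (sub_nonneg.2 hxy)] at hd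

lemma ordConnected_fiber_comp_lastBefore (hK : IsClosed K) (h0 : (0 : ℝ) ∈ K)
    (hmin : ∀ s ∈ K, ∀ t ∈ K, σ s = σ t → Disjoint (Ioo s t) K) (z : X) :
    (Icc 0 1 ∩ (σ ∘ lastBefore K) ⁻¹' {z}).OrdConnected := by
  refine ⟨fun s hs t ht r hr => ⟨⟨hs.1.1.trans hr.1, hr.2.trans ht.1.2⟩, ?_⟩⟩
  simp only [mem_preimage, mem_singleton_iff, Function.comp_apply] at hs ht ⊢
  obtain ⟨hpK, -⟩ := lastBefore_mem hK h0 hs.1.1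
  obtain ⟨hqK, -⟩ := lastBefore_mem hK h0 ht.1.1
  obtain ⟨hmK, -⟩ := lastBefore_mem hK h0 (hs.1.1.trans hr.1)
  have hpm := lastBefore_mono h0 hs.1.1 hr.1
  have hmq := lastBefore_mono h0 (hs.1.1.trans hr.1) hr.2
  by_contra hne
  have hmp : lastBefore K r ≠ lastBefore K s := fun h => hne (h ▸ hs.2)
  have hmq' : lastBefore K r ≠ lastBefore K t := fun h => hne (h ▸ ht.2)
  exact disjoint_left.1 (hmin _ hpK _ hqK (hs.2.trans ht.2.symm))
    ⟨hpm.lt_of_ne hmp.symm, hmq.lt_of_ne hmq'⟩ hmK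

lemma exists_curve_ordConnected_fiber [MetricSpace X] (hσ : ContinuousOn σ (Icc 0 1)) :
    ∃ τ : ℝ → X, ContinuousOn τ (Icc 0 1) ∧ τ 0 = σ 0 ∧ τ 1 = σ 1 ∧
      τ '' Icc 0 1 ⊆ σ '' Icc 0 1 ∧ eVariationOn τ (Icc 0 1) ≤ eVariationOn σ (Icc 0 1) ∧
      ∀ z, (Icc 0 1 ∩ τ ⁻¹' {z}).OrdConnected := by
  obtain ⟨K, hK, hKI, h0, h1, hσK, hmin⟩ := exists_minimal_bridgesGaps hσ
  have hmaps : MapsTo (lastBefore K) (Icc 0 1) (Icc 0 1) :=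
    fun r hr => hKI (lastBefore_mem hK h0 hr.1).1
  have hmono : MonotoneOn (lastBefore K) (Icc 0 1) :=
    fun r hr _ _ h => lastBefore_mono h0 hr.1 h
  refine ⟨σ ∘ lastBefore K, hσK.continuousOn_comp_lastBefore hσ hK h0,
    by simp [lastBefore_of_mem h0], by simp [lastBefore_of_mem h1], ?_,
    eVariationOn.comp_le_of_monotoneOn σ _ hmono hmaps,
    ordConnected_fiber_comp_lastBefore hK h0 hmin⟩
  rw [image_comp]
  exact image_mono hmaps.image_subset

end LoopRemoval

lemma BoundedVariationOn.continuousOn_variationOnFromTo_s11 {E : Type*} [PseudoEMetricSpace E]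
    {f : ℝ → E} {s : Set ℝ} (hf : BoundedVariationOn f s) (hc : ContinuousOn f s) {a : ℝ}
    (ha : a ∈ s) : ContinuousOn (variationOnFromTo f s a) s := by
  intro x hx
  have hR := hf.tendsto_eVariationOn_Icc_zero_right x ((hc x hx).mono inter_subset_left)
  have hL := hf.tendsto_eVariationOn_Icc_zero_left ((hc x hx).mono inter_subset_left)
  have hlim := ((ENNReal.tendsto_toReal ENNReal.zero_ne_top).comp hR).sub
    ((ENNReal.tendsto_toReal ENNReal.zero_ne_top).comp hL)
  rw [ENNReal.toReal_zero, sub_zero] at hlim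
  refine ((tendsto_const_nhds (x := variationOnFromTo f s a x)).add hlim).congr' ?_ |>.mono_right
    (by rw [add_zero])
  filter_upwards [self_mem_nhdsWithin] with y hy
  rw [Function.comp_apply, Function.comp_apply,
    ← variationOnFromTo.add hf.locallyBoundedVariationOn ha hx hy]
  rcases le_total x y with h | h
  · rw [variationOnFromTo.eq_of_le f s h,
      eVariationOn.subsingleton f ((subsingleton_Icc_of_ge h).anti inter_subset_right),
      ENNReal.toReal_zero, sub_zero]
  · rw [variationOnFromTo.eq_of_ge f s h,
      eVariationOn.subsingleton f ((subsingleton_Icc_of_ge h).anti inter_subset_right),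
      ENNReal.toReal_zero, zero_sub]

lemma HasConstantSpeedOnWith.lipschitzOnWith_s11 {E : Type*} [PseudoEMetricSpace E] {f : ℝ → E}
    {s : Set ℝ} {l : ℝ≥0} (h : HasConstantSpeedOnWith f s l) : LipschitzOnWith l f s := by
  have key : ∀ u ∈ s, ∀ v ∈ s, u ≤ v → edist (f u) (f v) ≤ l * edist u v :=
    fun u hu v hv huv => by
      rw [edist_comm u, edist_dist v, Real.dist_eq, abs_of_nonneg (sub_nonneg.2 huv),
        ← ENNReal.ofReal_coe_nnreal, ← ENNReal.ofReal_mul l.coe_nonneg, ← h hu hv]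
      exact eVariationOn.edist_le f ⟨hu, le_rfl, huv⟩ ⟨hv, huv, le_rfl⟩
  intro u hu v hv
  rcases le_total u v with huv | hvu
  · exact key u hu v hv huv
  · rw [edist_comm, edist_comm u]
    exact key v hv u hu hvu

lemma injOn_naturalParameterization {α E : Type*} [LinearOrder α] [EMetricSpace E] {f : α → E}
    {s : Set α} (hf : LocallyBoundedVariationOn f s) {a : α} (ha : a ∈ s)
    (hfib : ∀ z, (s ∩ f ⁻¹' {z}).OrdConnected) :
    InjOn (naturalParameterization f s a) (variationOnFromTo f s a '' s) := by
  rintro _ ⟨b, hb, rfl⟩ _ ⟨c, hc, rfl⟩ hbc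
  rw [edist_eq_zero.1 (edist_naturalParameterization_eq_zero hf ha hb),
    edist_eq_zero.1 (edist_naturalParameterization_eq_zero hf ha hc)] at hbc
  have hconst : ∀ x ∈ s ∩ uIcc b c, f x = f b := fun x hx =>
    ((hfib (f b)).uIcc_subset ⟨hb, rfl⟩ ⟨hc, hbc.symm⟩ hx.2).2
  refine (variationOnFromTo.eq_left_iff hf ha hb hc).2
    ((variationOnFromTo.eq_zero_iff hf hb hc).2 fun x hx y hy => ?_)
  rw [hconst x hx, hconst y hy, edist_self]

section ArcLength

variable {X : Type*} [EMetricSpace X]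

lemma exists_unitInterval_reparam {f : ℝ → X} {ℓ : ℝ} (hℓ : 0 < ℓ)
    (hfc : ContinuousOn f (Icc 0 ℓ)) (hfi : InjOn f (Icc 0 ℓ)) :
    ∃ g : ℝ → X, IsCurveOn g (f 0) (f ℓ) ∧ InjOn g (Icc 0 1) ∧
      g '' Icc 0 1 = f '' Icc 0 ℓ ∧ eVariationOn g (Icc 0 1) = eVariationOn f (Icc 0 ℓ) := by
  have hmaps : MapsTo (ℓ * ·) (Icc (0 : ℝ) 1) (Icc 0 ℓ) :=
    fun s hs => ⟨by nlinarith [hs.1], by nlinarith [hs.2]⟩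
  have hmono : MonotoneOn (ℓ * ·) (Icc (0 : ℝ) 1) :=
    fun s _ t _ hst => mul_le_mul_of_nonneg_left hst hℓ.le
  have hcont : ContinuousOn (ℓ * ·) (Icc (0 : ℝ) 1) := by fun_prop
  have himage : (ℓ * ·) '' Icc (0 : ℝ) 1 = Icc 0 ℓ := by
    rw [hcont.image_Icc_of_monotoneOn zero_le_one hmono, mul_zero, mul_one]
  refine ⟨f ∘ (ℓ * ·), ⟨hfc.comp hcont hmaps, by simp, by simp⟩,
    fun s hs t ht hst => mul_left_cancel₀ hℓ.ne' (hfi (hmaps hs) (hmaps ht) hst),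
    by rw [image_comp, himage], ?_⟩
  rw [eVariationOn_comp_Icc_of_monotoneOn f zero_le_one hcont hmono, mul_zero, mul_one]

/-- The arc-length parametrization collapses the intervals on which `τ` is constant. -/
lemma exists_injOn_reparam {τ : ℝ → X} (hτc : ContinuousOn τ (Icc 0 1))
    (hτfin : eVariationOn τ (Icc 0 1) ≠ ⊤) (hτ : ∀ z, (Icc 0 1 ∩ τ ⁻¹' {z}).OrdConnected)
    (hne : τ 0 ≠ τ 1) :
    ∃ g : ℝ → X, IsCurveOn g (τ 0) (τ 1) ∧ InjOn g (Icc 0 1) ∧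
      g '' Icc 0 1 = τ '' Icc 0 1 ∧ eVariationOn g (Icc 0 1) = eVariationOn τ (Icc 0 1) := by
  have hbv : BoundedVariationOn τ (Icc 0 1) := hτfin
  have hlbv := hbv.locallyBoundedVariationOn
  have h0 : (0 : ℝ) ∈ Icc (0 : ℝ) 1 := left_mem_Icc.2 zero_le_one
  have h1 : (1 : ℝ) ∈ Icc (0 : ℝ) 1 := right_mem_Icc.2 zero_le_one
  set φ := variationOnFromTo τ (Icc 0 1) 0
  set f := naturalParameterization τ (Icc 0 1) 0
  have hφ0 : φ 0 = 0 := variationOnFromTo.self τ _ 0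
  have hφI : φ '' Icc 0 1 = Icc 0 (φ 1) := by
    rw [(hbv.continuousOn_variationOnFromTo_s11 hτc h0).image_Icc_of_monotoneOn zero_le_one
      (variationOnFromTo.monotoneOn hlbv h0)]
    exact congrArg (Icc · _) hφ0
  have hfφ : ∀ b ∈ Icc (0 : ℝ) 1, f (φ b) = τ b := fun b hb =>
    edist_eq_zero.1 (edist_naturalParameterization_eq_zero hlbv h0 hb)
  have hspeed : HasUnitSpeedOn f (Icc 0 (φ 1)) :=
    hφI ▸ has_unit_speed_naturalParameterization τ hlbv h0
  have hℓ : 0 < φ 1 := by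
    refine (variationOnFromTo.nonneg_of_le τ _ zero_le_one).lt_of_ne fun h => hne ?_
    rw [← hfφ 0 h0, ← hfφ 1 h1, hφ0]
    exact congrArg f h
  obtain ⟨g, ⟨hgc, hg0, hg1⟩, hgi, hgim, hgvar⟩ := exists_unitInterval_reparam hℓ
    hspeed.lipschitzOnWith_s11.continuousOn (hφI ▸ injOn_naturalParameterization hlbv h0 hτ)
  refine ⟨g, ⟨hgc, ?_, ?_⟩, hgi, ?_, ?_⟩
  · rw [hg0, ← hfφ 0 h0, hφ0]
  · rw [hg1, hfφ 1 h1]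
  · rw [hgim, ← hφI, ← image_comp]
    exact EqOn.image_eq fun b hb => hfφ b hb
  · rw [hgvar, ← inter_self (Icc 0 (φ 1)), hspeed (left_mem_Icc.2 hℓ.le)
      (right_mem_Icc.2 hℓ.le), NNReal.coe_one, one_mul, sub_zero]
    show ENNReal.ofReal (variationOnFromTo τ (Icc 0 1) 0 1) = _
    rw [variationOnFromTo.eq_of_le τ _ zero_le_one, inter_self, ENNReal.ofReal_toReal hτfin]

end ArcLength

section Arcs

variable {X : Type*} [MetricSpace X]

theorem IsCurveOn.exists_arc {σ : ℝ → X} {x y : X} (hσ : IsCurveOn σ x y) (hxy : x ≠ y)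
    (hfin : eVariationOn σ (Icc 0 1) ≠ ⊤) :
    ∃ g : ℝ → X, IsCurveOn g x y ∧ InjOn g (Icc 0 1) ∧ g '' Icc 0 1 ⊆ σ '' Icc 0 1 ∧
      eVariationOn g (Icc 0 1) ≤ eVariationOn σ (Icc 0 1) := by
  obtain ⟨hσc, rfl, rfl⟩ := hσ
  obtain ⟨τ, hτc, hτ0, hτ1, hτim, hτvar, hτ⟩ := exists_curve_ordConnected_fiber hσc
  obtain ⟨g, hg, hgi, hgim, hgvar⟩ :=
    exists_injOn_reparam hτc (ne_top_of_le_ne_top hfin hτvar) hτ (hτ0 ▸ hτ1 ▸ hxy)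
  exact ⟨g, hτ0 ▸ hτ1 ▸ hg, hgi, hgim ▸ hτim, hgvar ▸ hτvar⟩

lemma IsRectArc.ne {A : Set X} {x y : X} (hA : IsRectArc A x y) : x ≠ y := by
  obtain ⟨γ, ⟨-, rfl, rfl⟩, hγi, -⟩ := hA
  exact fun h => zero_ne_one (hγi (left_mem_Icc.2 zero_le_one) (right_mem_Icc.2 zero_le_one) h)

lemma IsMetricTree.existsUnique_rectArc (h : IsMetricTree X) {x y : X} (hxy : x ≠ y) :
    ∃! A : Set X, IsRectArc A x y := by
  obtain ⟨hgeo, huniq⟩ := h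
  obtain ⟨γ, hγ, hγvar⟩ := hgeo x y
  have hfin : eVariationOn γ (Icc 0 1) ≠ ⊤ := hγvar ▸ edist_ne_top x y
  obtain ⟨g, hg, hgi, -, hgvar⟩ := hγ.exists_arc hxy hfin
  exact ⟨_, ⟨g, hg, hgi, rfl, ne_top_of_le_ne_top hfin hgvar⟩,
    fun B ⟨σ, hσ, hσi, hσB, _⟩ => (huniq x y hxy).unique ⟨σ, hσ, hσi, hσB⟩ ⟨g, hg, hgi, rfl⟩⟩

/-- A point `q` of the rectifiable arc missed by `c` could be avoided by a rectifiable curve,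
and hence by a second rectifiable arc. -/
lemma IsRectArc.subset_image_of_curve (hl : IsLengthSpace X)
    (huniq : ∀ x y : X, x ≠ y → ∃! A : Set X, IsRectArc A x y) {A : Set X} {a b : X}
    (hA : IsRectArc A a b) {c : ℝ → X} (hc : IsCurveOn c a b) : A ⊆ c '' Icc 0 1 := by
  intro q hqA
  by_contra hq
  obtain ⟨d, hd, hdfin, hdq⟩ := hl.rectJoinedIn_of_curve isOpen_compl_singleton hc
    fun z hz (hzq : z = q) => hq (hzq ▸ hz)
  obtain ⟨g, hg, hgi, hgd, hgvar⟩ := hd.exists_arc hA.ne hdfin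
  have hgA : g '' Icc 0 1 = A :=
    (huniq a b hA.ne).unique ⟨g, hg, hgi, rfl, ne_top_of_le_ne_top hdfin hgvar⟩ hA
  exact hdq (hgd (hgA ▸ hqA)) rfl

lemma isGeodesicSpace_of_existsUnique_rectArc (hl : IsLengthSpace X)
    (huniq : ∀ x y : X, x ≠ y → ∃! A : Set X, IsRectArc A x y) :
    IsGeodesicSpace X := by
  intro x y
  rcases eq_or_ne x y with rfl | hxy
  · exact ⟨fun _ => x, ⟨continuousOn_const, rfl, rfl⟩,
      by rw [edist_self, eVariationOn.constant_on (by simp)]⟩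
  obtain ⟨A, ⟨γ, hγ, hγi, hγA, -⟩, hAuniq⟩ := huniq x y hxy
  refine ⟨γ, hγ, le_antisymm ?_ ?_⟩
  · rw [hl x y]
    refine le_sInf ?_
    rintro _ ⟨σ, hσ, rfl⟩
    rcases eq_or_ne (eVariationOn σ (Icc 0 1)) ⊤ with h | hσfin
    · exact h ▸ le_top
    obtain ⟨g, hg, hgi, -, hgvar⟩ := hσ.exists_arc hxy hσfin
    have hgA : g '' Icc 0 1 = A := hAuniq _ ⟨g, hg, hgi, rfl, ne_top_of_le_ne_top hσfin hgvar⟩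
    rw [eVariationOn_eq_of_image_eq hg.1 hgi hγ.1 hγi (hγA.trans hgA.symm)
      (hγ.2.1.trans hg.2.1.symm) (hγ.2.2.trans hg.2.2.symm)]
    exact hgvar
  · simpa only [hγ.2.1, hγ.2.2] using
      eVariationOn.edist_le γ (left_mem_Icc.2 zero_le_one) (right_mem_Icc.2 zero_le_one)

lemma existsUnique_arc_of_existsUnique_rectArc (hl : IsLengthSpace X)
    (huniq : ∀ x y : X, x ≠ y → ∃! A : Set X, IsRectArc A x y) {x y : X}
    (hxy : x ≠ y) : ∃! A : Set X, IsArc A x y := by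
  obtain ⟨_, ⟨γ, hγ, hγi, rfl, hγfin⟩, -⟩ := huniq x y hxy
  refine ⟨γ '' Icc 0 1, ⟨γ, hγ, hγi, rfl⟩, ?_⟩
  rintro _ ⟨σ, hσ, hσi, rfl⟩
  exact (image_eq_of_image_subset hσ.1 hσi hγ.1
    (IsRectArc.subset_image_of_curve hl huniq ⟨γ, hγ, hγi, rfl, hγfin⟩ hσ)
    (hγ.2.1.trans hσ.2.1.symm) (hγ.2.2.trans hσ.2.2.symm)).symm

end Arcs

/-- A length space is a metric tree if and only if any two distinct points are joined
by a unique rectifiable arc. -/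
theorem metricTree_iff_unique_rect_arcs {X : Type*} [MetricSpace X]
    (hl : IsLengthSpace X) :
    IsMetricTree X ↔ ∀ x y : X, x ≠ y → ∃! A : Set X, IsRectArc A x y :=
  ⟨fun h _ _ hxy => h.existsUnique_rectArc hxy, fun h =>
    ⟨isGeodesicSpace_of_existsUnique_rectArc hl h,
      fun _ _ hxy => existsUnique_arc_of_existsUnique_rectArc hl h hxy⟩⟩
end
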